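/- Let A₁, A₂ be Hermitian dA×dA complex matrices with no common eigenvector (no nonzero α ∈ ℂ^{dA} is simultaneously an eigenvector of A₁ and of A₂), and let B₁, B₂ be Hermitian dB×dB complex matrices with no common eigenvector. Then for all real k₁, k₂ with k₁·k₂ ≠ 0, setting K = k₁·(A₁ ⊗ B₁) + k₂·(A₂ ⊗ B₂), either every eigenvector of K corresponding to the minimum eigenvalue λ_min(K) is entangled, or every eigenvector of K corresponding to the maximum eigenvalue λ_max(K) is entangled. -/

import Mathlib

open Matrix
open scoped Kronecker

/-- The Kronecker (tensor) product of two vectors: `(α ⊗ β)(i,j) = α i * β j`. -/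
def vecKron {dA dB : ℕ} (α : Fin dA → ℂ) (β : Fin dB → ℂ) : Fin dA × Fin dB → ℂ :=
  fun p => α p.1 * β p.2

/-- The minimum (real) eigenvalue of a matrix: the infimum of the set of real numbers `μ`
admitting a nonzero eigenvector with eigenvalue `μ`.  For a Hermitian matrix this is the
least eigenvalue. -/
noncomputable def minEig {n : Type*} [Fintype n] (K : Matrix n n ℂ) : ℝ :=
  sInf {μ : ℝ | ∃ v : n → ℂ, v ≠ 0 ∧ K.mulVec v = (μ : ℂ) • v}

/-- The maximum (real) eigenvalue of a matrix. -/
noncomputable def maxEig {n : Type*} [Fintype n] (K : Matrix n n ℂ) : ℝ :=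
  sSup {μ : ℝ | ∃ v : n → ℂ, v ≠ 0 ∧ K.mulVec v = (μ : ℂ) • v}

/-!
A product eigenvector `α ⊗ β` of `K` must have eigenvalue `0`. Its eigen-equation reads
`k₁ (A₁α) ⊗ (B₁β) + k₂ (A₂α) ⊗ (B₂β) = λ α ⊗ β`. If `A₁α, A₂α` are linearly independent,
comparing coefficients shows that `B₁β, B₂β` are multiples of `β`; otherwise the left side is
a single rank-one tensor, and `λ ≠ 0` makes `A₁α, A₂α` multiples of `α`. Either way a pair
would have a common eigenvector.

So if both extreme eigenspaces contained product vectors, then `λ_min(K) = λ_max(K) = 0`, and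
the Hermitian `K` would vanish. But `K = 0`, applied to `α ⊗ β` with `α` an eigenvector of `A₂`
and `β` one of `B₂`, gives the rank-one relation `(A₁α) ⊗ (B₁β) ∈ ℂ α ⊗ β`, which again makes
`α` or `β` a common eigenvector.
-/

section RankOne

variable {𝕜 V m n : Type*} [Field 𝕜]

theorem exists_eq_smul_of_mul_eq_mul {w β : n → 𝕜} {j₀ : n} (hj₀ : β j₀ ≠ 0)
    (h : ∀ j, β j₀ * w j = β j * w j₀) : ∃ b : 𝕜, w = b • β :=
  ⟨w j₀ / β j₀, funext fun j => by
    rw [Pi.smul_apply, smul_eq_mul, div_mul_eq_mul_div, eq_div_iff hj₀]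
    linear_combination h j⟩

theorem eq_zero_or_exists_eq_smul_of_mul_eq {u α : m → 𝕜} {w β : n → 𝕜} {c : 𝕜}
    (h : ∀ i j, u i * w j = c * (α i * β j)) : w = 0 ∨ ∃ a : 𝕜, u = a • α := by
  rcases eq_or_ne w 0 with hw | hw
  · exact .inl hw
  obtain ⟨j, hj⟩ := Function.ne_iff.mp hw
  refine .inr ⟨c * β j / w j, funext fun i => ?_⟩
  rw [Pi.smul_apply, smul_eq_mul, div_mul_eq_mul_div, eq_div_iff hj]
  linear_combination h i j

theorem exists_eq_smul_of_not_linearIndependent [AddCommGroup V] [Module 𝕜 V] {x y : V}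
    (h : ¬ LinearIndependent 𝕜 ![x, y]) : ∃ (z : V) (a b : 𝕜), x = a • z ∧ y = b • z := by
  rcases eq_or_ne x 0 with rfl | hx
  · exact ⟨y, 0, 1, by simp, by simp⟩
  obtain ⟨a, rfl⟩ : ∃ a : 𝕜, a • x = y := by
    simpa [LinearIndependent.pair_iff' hx] using h
  exact ⟨x, 1, a, by simp, rfl⟩

theorem exists_eq_smul_of_linearIndependent {u₁ u₂ α : m → 𝕜} {w₁ w₂ β : n → 𝕜}
    {k₁ k₂ c : 𝕜} (hu : LinearIndependent 𝕜 ![u₁, u₂]) (hβ : β ≠ 0) (hk₁ : k₁ ≠ 0)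
    (hk₂ : k₂ ≠ 0) (h : ∀ i j, k₁ * (u₁ i * w₁ j) + k₂ * (u₂ i * w₂ j) = c * (α i * β j)) :
    (∃ b₁ : 𝕜, w₁ = b₁ • β) ∧ (∃ b₂ : 𝕜, w₂ = b₂ • β) := by
  obtain ⟨j₀, hj₀⟩ := Function.ne_iff.mp hβ
  -- the columns `j` and `j₀` of the left side are proportional, like those of `α βᵀ`
  have hcoef (j : n) : k₁ * (β j₀ * w₁ j - β j * w₁ j₀) = 0 ∧
      k₂ * (β j₀ * w₂ j - β j * w₂ j₀) = 0 :=
    LinearIndependent.pair_iff.mp hu _ _ <| funext fun i => by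
      simp only [Pi.add_apply, Pi.smul_apply, smul_eq_mul, Pi.zero_apply]
      linear_combination β j₀ * h i j - β j * h i j₀
  exact ⟨exists_eq_smul_of_mul_eq_mul hj₀ fun j =>
      sub_eq_zero.mp ((mul_eq_zero.mp (hcoef j).1).resolve_left hk₁),
    exists_eq_smul_of_mul_eq_mul hj₀ fun j =>
      sub_eq_zero.mp ((mul_eq_zero.mp (hcoef j).2).resolve_left hk₂)⟩

theorem eq_zero_of_add_mul_eq_mul {u₁ u₂ α : m → 𝕜} {w₁ w₂ β : n → 𝕜} {k₁ k₂ c : 𝕜}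
    (hα : α ≠ 0) (hβ : β ≠ 0) (hk₁ : k₁ ≠ 0) (hk₂ : k₂ ≠ 0)
    (hu : ¬ ((∃ a₁ : 𝕜, u₁ = a₁ • α) ∧ (∃ a₂ : 𝕜, u₂ = a₂ • α)))
    (hw : ¬ ((∃ b₁ : 𝕜, w₁ = b₁ • β) ∧ (∃ b₂ : 𝕜, w₂ = b₂ • β)))
    (h : ∀ i j, k₁ * (u₁ i * w₁ j) + k₂ * (u₂ i * w₂ j) = c * (α i * β j)) : c = 0 := by
  by_cases hind : LinearIndependent 𝕜 ![u₁, u₂]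
  · exact absurd (exists_eq_smul_of_linearIndependent hind hβ hk₁ hk₂ h) hw
  obtain ⟨u, a₁, a₂, rfl, rfl⟩ := exists_eq_smul_of_not_linearIndependent hind
  have h' (i : m) (j : n) : u i * (k₁ * a₁ * w₁ j + k₂ * a₂ * w₂ j) = c * (α i * β j) := by
    simp only [Pi.smul_apply, smul_eq_mul] at h
    linear_combination h i j
  rcases eq_zero_or_exists_eq_smul_of_mul_eq h' with hw0 | ⟨a, rfl⟩
  · obtain ⟨i, hi⟩ := Function.ne_iff.mp hα
    obtain ⟨j, hj⟩ := Function.ne_iff.mp hβ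
    have hc : c * (α i * β j) = 0 := by simpa [← h' i j] using Or.inr (congrFun hw0 j)
    exact (mul_eq_zero.mp hc).resolve_right (mul_ne_zero hi hj)
  · exact absurd ⟨⟨a₁ * a, smul_smul _ _ _⟩, ⟨a₂ * a, smul_smul _ _ _⟩⟩ hu

end RankOne

section Eigenvalues

variable {n : Type*} [Fintype n]

theorem Matrix.exists_mulVec_eq_smul [DecidableEq n] [Nonempty n] (A : Matrix n n ℂ) :
    ∃ v : n → ℂ, v ≠ 0 ∧ ∃ a : ℂ, A *ᵥ v = a • v := by
  obtain ⟨a, ha⟩ := Module.End.exists_eigenvalue (Matrix.toLin' A)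
  obtain ⟨v, hv⟩ := ha.exists_hasEigenvector
  exact ⟨v, hv.2, a, by simpa using hv.apply_eq_smul⟩

theorem finite_setOf_real_eigenvalue (K : Matrix n n ℂ) :
    {μ : ℝ | ∃ v : n → ℂ, v ≠ 0 ∧ K *ᵥ v = (μ : ℂ) • v}.Finite := by
  refine ((Module.End.finite_hasEigenvalue (Matrix.mulVecLin K)).preimage
    Complex.ofReal_injective.injOn).subset ?_
  rintro μ ⟨v, hv, hKv⟩
  exact Module.End.hasEigenvalue_of_hasEigenvector ⟨Module.End.mem_eigenspace_iff.mpr hKv, hv⟩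

theorem minEig_le {K : Matrix n n ℂ} {μ : ℝ} {v : n → ℂ} (hv : v ≠ 0)
    (hKv : K *ᵥ v = (μ : ℂ) • v) : minEig K ≤ μ :=
  csInf_le (finite_setOf_real_eigenvalue K).bddBelow ⟨v, hv, hKv⟩

theorem le_maxEig {K : Matrix n n ℂ} {μ : ℝ} {v : n → ℂ} (hv : v ≠ 0)
    (hKv : K *ᵥ v = (μ : ℂ) • v) : μ ≤ maxEig K :=
  le_csSup (finite_setOf_real_eigenvalue K).bddAbove ⟨v, hv, hKv⟩

theorem Matrix.IsHermitian.eq_zero_of_minEig_eq_zero_of_maxEig_eq_zero {K : Matrix n n ℂ}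
    (hK : K.IsHermitian) (hmin : minEig K = 0) (hmax : maxEig K = 0) : K = 0 := by
  by_contra hK0
  obtain ⟨v, t, ht, hv, hKv⟩ := hK.exists_eigenvector_of_ne_zero hK0
  rw [← Complex.coe_smul] at hKv
  exact ht (le_antisymm (hmax ▸ le_maxEig hv hKv) (hmin ▸ minEig_le hv hKv))

end Eigenvalues

theorem Matrix.IsHermitian.kronecker {m n : Type*} {A : Matrix m m ℂ} {B : Matrix n n ℂ}
    (hA : A.IsHermitian) (hB : B.IsHermitian) : (A ⊗ₖ B).IsHermitian := by
  rw [IsHermitian, conjTranspose_kronecker, hA.eq, hB.eq]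

section Kronecker

variable {dA dB : ℕ} {A₁ A₂ : Matrix (Fin dA) (Fin dA) ℂ} {B₁ B₂ : Matrix (Fin dB) (Fin dB) ℂ}

theorem kronecker_mulVec_vecKron (A : Matrix (Fin dA) (Fin dA) ℂ)
    (B : Matrix (Fin dB) (Fin dB) ℂ) (α : Fin dA → ℂ) (β : Fin dB → ℂ) :
    (A ⊗ₖ B) *ᵥ vecKron α β = vecKron (A *ᵥ α) (B *ᵥ β) := by
  ext ⟨i, j⟩
  simp only [mulVec, dotProduct, vecKron, Fintype.sum_prod_type, kroneckerMap_apply,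
    Finset.sum_mul_sum]
  exact Finset.sum_congr rfl fun _ _ => Finset.sum_congr rfl fun _ _ => by ring

theorem smul_kronecker_add_smul_kronecker_mulVec_vecKron_apply (k₁ k₂ : ℂ)
    (α : Fin dA → ℂ) (β : Fin dB → ℂ) (i : Fin dA) (j : Fin dB) :
    ((k₁ • (A₁ ⊗ₖ B₁) + k₂ • (A₂ ⊗ₖ B₂)) *ᵥ vecKron α β) (i, j) =
      k₁ * ((A₁ *ᵥ α) i * (B₁ *ᵥ β) j) + k₂ * ((A₂ *ᵥ α) i * (B₂ *ᵥ β) j) := by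
  simp [add_mulVec, smul_mulVec, kronecker_mulVec_vecKron, vecKron]

theorem eq_zero_of_mulVec_vecKron_eq_smul
    (hA : ¬ ∃ α : Fin dA → ℂ, α ≠ 0 ∧ (∃ a₁ : ℂ, A₁ *ᵥ α = a₁ • α) ∧
        (∃ a₂ : ℂ, A₂ *ᵥ α = a₂ • α))
    (hB : ¬ ∃ β : Fin dB → ℂ, β ≠ 0 ∧ (∃ b₁ : ℂ, B₁ *ᵥ β = b₁ • β) ∧
        (∃ b₂ : ℂ, B₂ *ᵥ β = b₂ • β))
    {k₁ k₂ c : ℂ} (hk₁ : k₁ ≠ 0) (hk₂ : k₂ ≠ 0) {α : Fin dA → ℂ} {β : Fin dB → ℂ}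
    (hv : vecKron α β ≠ 0)
    (hKv : (k₁ • (A₁ ⊗ₖ B₁) + k₂ • (A₂ ⊗ₖ B₂)) *ᵥ vecKron α β = c • vecKron α β) : c = 0 := by
  have hα : α ≠ 0 := by rintro rfl; exact hv (funext fun _ => zero_mul _)
  have hβ : β ≠ 0 := by rintro rfl; exact hv (funext fun _ => mul_zero _)
  refine eq_zero_of_add_mul_eq_mul hα hβ hk₁ hk₂ (fun h => hA ⟨α, hα, h⟩)
    (fun h => hB ⟨β, hβ, h⟩) fun i j => ?_
  rw [← smul_kronecker_add_smul_kronecker_mulVec_vecKron_apply, hKv]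
  rfl

theorem smul_kronecker_add_smul_kronecker_ne_zero [Nonempty (Fin dA)] [Nonempty (Fin dB)]
    (hA : ¬ ∃ α : Fin dA → ℂ, α ≠ 0 ∧ (∃ a₁ : ℂ, A₁ *ᵥ α = a₁ • α) ∧
        (∃ a₂ : ℂ, A₂ *ᵥ α = a₂ • α))
    (hB : ¬ ∃ β : Fin dB → ℂ, β ≠ 0 ∧ (∃ b₁ : ℂ, B₁ *ᵥ β = b₁ • β) ∧
        (∃ b₂ : ℂ, B₂ *ᵥ β = b₂ • β))
    {k₁ k₂ : ℂ} (hk₁ : k₁ ≠ 0) : k₁ • (A₁ ⊗ₖ B₁) + k₂ • (A₂ ⊗ₖ B₂) ≠ 0 := by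
  intro hK
  obtain ⟨α, hα, a, hAα⟩ := A₂.exists_mulVec_eq_smul
  obtain ⟨β, hβ, b, hBβ⟩ := B₂.exists_mulVec_eq_smul
  have h (i : Fin dA) (j : Fin dB) :
      (k₁ • (A₁ *ᵥ α)) i * (B₁ *ᵥ β) j = -(k₂ * a * b) * (α i * β j) := by
    have := congrFun (congrArg (· *ᵥ vecKron α β) hK) (i, j)
    simp only [smul_kronecker_add_smul_kronecker_mulVec_vecKron_apply, zero_mulVec, hAα, hBβ,
      Pi.zero_apply, Pi.smul_apply, smul_eq_mul] at this ⊢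
    linear_combination this
  rcases eq_zero_or_exists_eq_smul_of_mul_eq h with hB₁ | ⟨a₁, hA₁⟩
  · exact hB ⟨β, hβ, ⟨0, by rw [hB₁, zero_smul]⟩, b, hBβ⟩
  · refine hA ⟨α, hα, ⟨k₁⁻¹ * a₁, ?_⟩, a, hAα⟩
    rw [← smul_smul, ← hA₁, smul_smul, inv_mul_cancel₀ hk₁, one_smul]

end Kronecker

/-- If the Hermitian pairs `A₁, A₂` and `B₁, B₂` each have no common
eigenvector, then for all nonzero reals `k₁, k₂`, setting
`K = k₁ A₁⊗B₁ + k₂ A₂⊗B₂`, either every eigenvector of `K` for the least eigenvalue is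
entangled, or every eigenvector of `K` for the greatest eigenvalue is entangled. -/
theorem stmt5 {dA dB : ℕ}
    (A₁ A₂ : Matrix (Fin dA) (Fin dA) ℂ) (B₁ B₂ : Matrix (Fin dB) (Fin dB) ℂ)
    (hA₁ : A₁.IsHermitian) (hA₂ : A₂.IsHermitian)
    (hB₁ : B₁.IsHermitian) (hB₂ : B₂.IsHermitian)
    (hA : ¬ ∃ α : Fin dA → ℂ, α ≠ 0 ∧ (∃ a₁ : ℂ, A₁.mulVec α = a₁ • α) ∧
        (∃ a₂ : ℂ, A₂.mulVec α = a₂ • α))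
    (hB : ¬ ∃ β : Fin dB → ℂ, β ≠ 0 ∧ (∃ b₁ : ℂ, B₁.mulVec β = b₁ • β) ∧
        (∃ b₂ : ℂ, B₂.mulVec β = b₂ • β))
    (k₁ k₂ : ℝ) (hk : k₁ * k₂ ≠ 0) :
    (∀ v : Fin dA × Fin dB → ℂ, v ≠ 0 →
      ((k₁ : ℂ) • (A₁ ⊗ₖ B₁) + (k₂ : ℂ) • (A₂ ⊗ₖ B₂)).mulVec v
        = (↑(minEig ((k₁ : ℂ) • (A₁ ⊗ₖ B₁) + (k₂ : ℂ) • (A₂ ⊗ₖ B₂))) : ℂ) • v →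
      ¬ ∃ (α : Fin dA → ℂ) (β : Fin dB → ℂ), v = vecKron α β) ∨
    (∀ v : Fin dA × Fin dB → ℂ, v ≠ 0 →
      ((k₁ : ℂ) • (A₁ ⊗ₖ B₁) + (k₂ : ℂ) • (A₂ ⊗ₖ B₂)).mulVec v
        = (↑(maxEig ((k₁ : ℂ) • (A₁ ⊗ₖ B₁) + (k₂ : ℂ) • (A₂ ⊗ₖ B₂))) : ℂ) • v →
      ¬ ∃ (α : Fin dA → ℂ) (β : Fin dB → ℂ), v = vecKron α β) := by
  have hk₁ : (k₁ : ℂ) ≠ 0 := Complex.ofReal_ne_zero.2 (left_ne_zero_of_mul hk)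
  have hk₂ : (k₂ : ℂ) ≠ 0 := Complex.ofReal_ne_zero.2 (right_ne_zero_of_mul hk)
  set K := (k₁ : ℂ) • (A₁ ⊗ₖ B₁) + (k₂ : ℂ) • (A₂ ⊗ₖ B₂)
  have hK : K.IsHermitian := ((hA₁.kronecker hB₁).smul (Complex.conj_ofReal k₁)).add
    ((hA₂.kronecker hB₂).smul (Complex.conj_ofReal k₂))
  by_contra! h
  obtain ⟨⟨v, hv, hKv, α, β, rfl⟩, ⟨v', hv', hKv', α', β', rfl⟩⟩ := h
  have hmin : minEig K = 0 := by
    exact_mod_cast eq_zero_of_mulVec_vecKron_eq_smul hA hB hk₁ hk₂ hv hKv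
  have hmax : maxEig K = 0 := by
    exact_mod_cast eq_zero_of_mulVec_vecKron_eq_smul hA hB hk₁ hk₂ hv' hKv'
  obtain ⟨⟨i, j⟩, -⟩ := Function.ne_iff.mp hv
  have : Nonempty (Fin dA) := ⟨i⟩
  have : Nonempty (Fin dB) := ⟨j⟩
  exact smul_kronecker_add_smul_kronecker_ne_zero hA hB hk₁
    (hK.eq_zero_of_minEig_eq_zero_of_maxEig_eq_zero hmin hmax)
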